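/- If (x(t), v(t)) is a solution of the Hug ODE, then the tangential velocity component v_∥(t) = T(x(t))v(t) satisfies d/dt v_∥ = −N′_∥(x)[v_⊥]v_⊥ − N′_⊥(x)[v_∥]v_∥, where v_⊥(t) = N(x(t))v(t). -/

import Mathlib

/-!
Differentiating `v_∥ = T(x) v` gives `v̇_∥ = (d/dt T(x)) v + T(x) v̇`. Differentiating
`N = Jᵀ(JJᵀ)⁻¹J` along `ẋ = v_∥` gives the Golub–Pereyra formula
`d/dt N(x) = N′_⊥[v_∥] + N′_∥[v_∥]`. Because `T J⁺ = 0` and `T² = T`, the projection `T` kills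
every `N′_⊥[·]` and fixes every `N′_∥[·]`, so `T v̇ = N′_∥[v_∥ − v_⊥] v`, and the `N′_∥[v_∥]` terms
cancel by linearity of `H` in its first argument. Finally `N′_⊥[w] v = N′_⊥[w] v_∥` and
`N′_∥[w] v = N′_∥[w] v_⊥`.
-/

open Matrix MeasureTheory

noncomputable section

abbrev Evec (n : ℕ) : Type := EuclideanSpace ℝ (Fin n)

/-- Apply a matrix to a vector of Euclidean space. -/
def mvE {m n : ℕ} (A : Matrix (Fin m) (Fin n) ℝ) (v : Evec n) : Evec m :=
  Matrix.toEuclideanLin A v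

/-- Moore–Penrose pseudoinverse `Aᵀ(AAᵀ)⁻¹` of a full-rank wide matrix. -/
def pinv {m n : ℕ} (A : Matrix (Fin m) (Fin n) ℝ) : Matrix (Fin n) (Fin m) ℝ :=
  Aᵀ * (A * Aᵀ)⁻¹

/-- Orthogonal projection onto the normal space: `N = A⁺A`. -/
def Nproj {m n : ℕ} (A : Matrix (Fin m) (Fin n) ℝ) : Matrix (Fin n) (Fin n) ℝ :=
  pinv A * A

/-- Orthogonal projection onto the tangent space: `T = I - N`. -/
def Tproj {m n : ℕ} (A : Matrix (Fin m) (Fin n) ℝ) : Matrix (Fin n) (Fin n) ℝ :=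
  1 - Nproj A

/-- Reflection: `R = I - 2N`. -/
def Rrefl {m n : ℕ} (A : Matrix (Fin m) (Fin n) ℝ) : Matrix (Fin n) (Fin n) ℝ :=
  1 - (2 : ℝ) • Nproj A

/-- Golub–Pereyra term `N′_⊥(x)[w] = J(x)⁺ H(x)[w,·] T(x)` (as a matrix),
built from the Jacobian matrix `A = J(x)` and the matrix `Hw = H(x)[w,·]`. -/
def Nperp' {m n : ℕ} (A Hw : Matrix (Fin m) (Fin n) ℝ) : Matrix (Fin n) (Fin n) ℝ :=
  pinv A * Hw * Tproj A

/-- Golub–Pereyra term `N′_∥(x)[w] = (N′_⊥(x)[w])ᵀ`. -/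
def Npar' {m n : ℕ} (A Hw : Matrix (Fin m) (Fin n) ℝ) : Matrix (Fin n) (Fin n) ℝ :=
  (Nperp' A Hw)ᵀ

/-- The right-hand side of the velocity equation of the Hug ODE:
`(N′_∥(x)[(T(x)−N(x))v] − N′_⊥(x)[(T(x)−N(x))v]) v`. -/
def hugVField {m n : ℕ} (J : Evec n → Matrix (Fin m) (Fin n) ℝ)
    (Hm : Evec n → Evec n → Matrix (Fin m) (Fin n) ℝ) (x v : Evec n) : Evec n :=
  mvE (Npar' (J x) (Hm x (mvE (Tproj (J x) - Nproj (J x)) v))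
      - Nperp' (J x) (Hm x (mvE (Tproj (J x) - Nproj (J x)) v))) v

theorem Matrix.isUnit_of_rank_eq_card {K n : Type*} [Field K] [Fintype n] [DecidableEq n]
    {A : Matrix n n K} (h : A.rank = Fintype.card n) : IsUnit A := by
  have hsurj : Function.Surjective A.mulVecLin := by
    refine LinearMap.range_eq_top.mp (Submodule.eq_top_of_finrank_eq ?_)
    rw [← rank, h, Module.finrank_fintype_fun_eq_card]
  exact mulVec_injective_iff_isUnit.mp (LinearMap.injective_iff_surjective.mpr hsurj)

theorem Matrix.isUnit_mul_transpose_of_rank_eq_card {K m n : Type*} [Field K] [LinearOrder K]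
    [IsStrictOrderedRing K] [Fintype m] [Fintype n] [DecidableEq m] {A : Matrix m n K}
    (h : A.rank = Fintype.card m) : IsUnit (A * Aᵀ) :=
  isUnit_of_rank_eq_card (by rw [rank_self_mul_transpose, h])

attribute [local instance] Matrix.linftyOpNormedAddCommGroup Matrix.linftyOpNormedSpace
  Matrix.linftyOpNormedRing Matrix.linftyOpNormedAlgebra

section MatrixCalculus

variable {l m n : Type*} [Fintype l] [Fintype m] [Fintype n] {t : ℝ}

theorem HasDerivAt.matrix_mul {A : ℝ → Matrix l m ℝ} {A' : Matrix l m ℝ}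
    {B : ℝ → Matrix m n ℝ} {B' : Matrix m n ℝ}
    (hA : HasDerivAt A A' t) (hB : HasDerivAt B B' t) :
    HasDerivAt (fun s => A s * B s) (A' * B t + A t * B') t := by
  have h := (mulLinearMap ℝ).toContinuousBilinearMap.hasDerivAt_of_bilinear
    (fun _ => hA) (fun _ => hB)
  rw [add_comm] at h
  exact h

theorem HasDerivAt.matrix_transpose {A : ℝ → Matrix m n ℝ} {A' : Matrix m n ℝ}
    (hA : HasDerivAt A A' t) : HasDerivAt (fun s => (A s)ᵀ) A'ᵀ t :=
  (transposeLinearEquiv m n ℝ ℝ).toLinearMap.toContinuousLinearMap.hasFDerivAt.comp_hasDerivAt t hA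

theorem HasDerivAt.matrix_inv [DecidableEq n] {A : ℝ → Matrix n n ℝ} {A' : Matrix n n ℝ}
    (hA : HasDerivAt A A' t) (hAt : IsUnit (A t)) :
    HasDerivAt (fun s => (A s)⁻¹) (-((A t)⁻¹ * A' * (A t)⁻¹)) t := by
  obtain ⟨u, hu⟩ := hAt
  have h := ((hu ▸ hasFDerivAt_ringInverse (𝕜 := ℝ) u :
    HasFDerivAt Ring.inverse _ (A t))).comp_hasDerivAt t hA
  simp only [Function.comp_def, ← nonsing_inv_eq_ringInverse, hu, coe_units_inv] at h
  exact h

end MatrixCalculus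

section EuclideanAction

variable {m n : ℕ}

lemma mvE_mul (A : Matrix (Fin m) (Fin n) ℝ) {k : ℕ} (B : Matrix (Fin n) (Fin k) ℝ)
    (v : Evec k) : mvE (A * B) v = mvE A (mvE B v) := by
  simp [mvE]

lemma mvE_sub (A B : Matrix (Fin m) (Fin n) ℝ) (v : Evec n) :
    mvE (A - B) v = mvE A v - mvE B v := by
  simp [mvE, map_sub]

theorem HasDerivAt.mvE {t : ℝ} {A : ℝ → Matrix (Fin m) (Fin n) ℝ}
    {A' : Matrix (Fin m) (Fin n) ℝ} {u : ℝ → Evec n} {u' : Evec n}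
    (hA : HasDerivAt A A' t) (hu : HasDerivAt u u' t) :
    HasDerivAt (fun s => mvE (A s) (u s)) (mvE A' (u t) + mvE (A t) u') t := by
  have h := (Matrix.toEuclideanLin (m := Fin m) (n := Fin n) (𝕜 := ℝ)).toLinearMap
    |>.toContinuousBilinearMap.hasDerivAt_of_bilinear (fun _ => hA) (fun _ => hu)
  rw [add_comm] at h
  exact h

end EuclideanAction

section Projections

variable {m n : ℕ} (A : Matrix (Fin m) (Fin n) ℝ)

lemma transpose_nproj : (Nproj A)ᵀ = Nproj A := by
  simp [Nproj, pinv, transpose_nonsing_inv, Matrix.mul_assoc]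

lemma transpose_tproj : (Tproj A)ᵀ = Tproj A := by
  simp [Tproj, transpose_nproj]

lemma npar'_sub (H K : Matrix (Fin m) (Fin n) ℝ) :
    Npar' A (H - K) = Npar' A H - Npar' A K := by
  simp [Npar', Nperp', Matrix.mul_sub, Matrix.sub_mul]

variable {A}

lemma mul_pinv (hA : IsUnit (A * Aᵀ)) : A * pinv A = 1 := by
  rw [pinv, ← Matrix.mul_assoc, mul_nonsing_inv _ ((isUnit_iff_isUnit_det _).mp hA)]

lemma tproj_mul_pinv (hA : IsUnit (A * Aᵀ)) : Tproj A * pinv A = 0 := by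
  rw [Tproj, Matrix.sub_mul, Nproj, Matrix.mul_assoc, mul_pinv hA]
  simp

lemma tproj_mul_nperp' (hA : IsUnit (A * Aᵀ)) (H : Matrix (Fin m) (Fin n) ℝ) :
    Tproj A * Nperp' A H = 0 := by
  simp [Nperp', ← Matrix.mul_assoc, tproj_mul_pinv hA]

lemma nproj_mul_nproj (hA : IsUnit (A * Aᵀ)) : Nproj A * Nproj A = Nproj A := by
  rw [Nproj, Matrix.mul_assoc, ← Matrix.mul_assoc A, mul_pinv hA, Matrix.one_mul]

lemma tproj_mul_tproj (hA : IsUnit (A * Aᵀ)) : Tproj A * Tproj A = Tproj A := by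
  simp [Tproj, Matrix.sub_mul, Matrix.mul_sub, nproj_mul_nproj hA]

lemma nperp'_mul_tproj (hA : IsUnit (A * Aᵀ)) (H : Matrix (Fin m) (Fin n) ℝ) :
    Nperp' A H * Tproj A = Nperp' A H := by
  rw [Nperp', Matrix.mul_assoc, tproj_mul_tproj hA]

lemma tproj_mul_npar' (hA : IsUnit (A * Aᵀ)) (H : Matrix (Fin m) (Fin n) ℝ) :
    Tproj A * Npar' A H = Npar' A H := by
  rw [Npar', ← transpose_tproj, ← transpose_mul, nperp'_mul_tproj hA]

lemma npar'_mul_nproj (hA : IsUnit (A * Aᵀ)) (H : Matrix (Fin m) (Fin n) ℝ) :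
    Npar' A H * Nproj A = Npar' A H := by
  rw [show Nproj A = 1 - Tproj A by simp [Tproj], Matrix.mul_sub, Matrix.mul_one, Npar',
    ← transpose_tproj, ← transpose_mul, tproj_mul_nperp' hA, transpose_zero, sub_zero]

lemma tangential_hug_identity (hA : IsUnit (A * Aᵀ)) (H K : Matrix (Fin m) (Fin n) ℝ)
    (v : Evec n) :
    mvE (-(Nperp' A H + Npar' A H)) v
        + mvE (Tproj A) (mvE (Npar' A (H - K) - Nperp' A (H - K)) v)
      = -mvE (Npar' A K) (mvE (Nproj A) v) - mvE (Nperp' A H) (mvE (Tproj A) v) := by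
  rw [← mvE_mul, ← mvE_mul, ← mvE_mul, Matrix.mul_sub, tproj_mul_npar' hA, tproj_mul_nperp' hA,
    npar'_mul_nproj hA, nperp'_mul_tproj hA, npar'_sub]
  simp only [mvE, map_add, map_neg, map_sub, map_zero, LinearMap.add_apply, LinearMap.neg_apply,
    LinearMap.sub_apply, LinearMap.zero_apply]
  abel

end Projections

theorem HasDerivAt.nproj {m n : ℕ} {t : ℝ} {A : ℝ → Matrix (Fin m) (Fin n) ℝ}
    {A' : Matrix (Fin m) (Fin n) ℝ} (hA : HasDerivAt A A' t) (hAt : IsUnit (A t * (A t)ᵀ)) :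
    HasDerivAt (fun s => Nproj (A s)) (Nperp' (A t) A' + Npar' (A t) A') t := by
  have hAT := hA.matrix_transpose
  have h := (hAT.matrix_mul ((hA.matrix_mul hAT).matrix_inv hAt)).matrix_mul hA
  refine h.congr_deriv ?_
  simp only [Nperp', Npar', Tproj, Nproj, pinv, transpose_mul, transpose_sub, transpose_transpose,
    transpose_nonsing_inv, Matrix.mul_sub, Matrix.mul_add, Matrix.add_mul, Matrix.mul_one,
    Matrix.mul_neg, Matrix.neg_mul, Matrix.mul_assoc]
  abel

def matrixCLMEquiv (m n : ℕ) : Matrix (Fin m) (Fin n) ℝ ≃ₗ[ℝ] (Evec n →L[ℝ] Evec m) :=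
  Matrix.toEuclideanLin.trans LinearMap.toContinuousLinearMap

section SecondDerivative

variable {m n : ℕ} {f : Evec n → Evec m}

lemma matrixCLMEquiv_hessian {y : Evec n} {H : Evec n → Matrix (Fin m) (Fin n) ℝ}
    (hH : ∀ w z : Evec n, mvE (H w) z = iteratedFDeriv ℝ 2 f y ![w, z]) (w : Evec n) :
    matrixCLMEquiv m n (H w) = fderiv ℝ (fderiv ℝ f) y w := by
  ext1 z
  simpa [matrixCLMEquiv, mvE, iteratedFDeriv_two_apply] using hH w z

lemma hessian_sub {y : Evec n} {H : Evec n → Matrix (Fin m) (Fin n) ℝ}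
    (hH : ∀ w z : Evec n, mvE (H w) z = iteratedFDeriv ℝ 2 f y ![w, z]) (a b : Evec n) :
    H (a - b) = H a - H b :=
  (matrixCLMEquiv m n).injective <| by simp [matrixCLMEquiv_hessian hH, map_sub]

lemma hasDerivAt_jacobian_comp {J : Evec n → Matrix (Fin m) (Fin n) ℝ}
    {H : Evec n → Matrix (Fin m) (Fin n) ℝ} {x : ℝ → Evec n} {x' : Evec n} {t : ℝ}
    (hx : HasDerivAt x x' t) (hf : ContDiffAt ℝ 2 f (x t))
    (hJ : ∀ y, HasFDerivAt f (matrixCLMEquiv m n (J y)) y)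
    (hH : ∀ w z : Evec n, mvE (H w) z = iteratedFDeriv ℝ 2 f (x t) ![w, z]) :
    HasDerivAt (fun s => J (x s)) (H x') t := by
  have hJ_eq : J = (matrixCLMEquiv m n).symm ∘ fderiv ℝ f :=
    funext fun y => by simp [(hJ y).fderiv]
  have hf' : DifferentiableAt ℝ (fderiv ℝ f) (x t) :=
    (hf.fderiv_right (m := 1) le_rfl).differentiableAt one_ne_zero
  have h := (matrixCLMEquiv m n).symm.toContinuousLinearEquiv.hasFDerivAt.comp_hasDerivAt t
    (hf'.hasFDerivAt.comp_hasDerivAt t hx)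
  rw [← matrixCLMEquiv_hessian hH] at h
  rw [hJ_eq]
  exact h.congr_deriv ((matrixCLMEquiv m n).symm_apply_apply (H x'))

end SecondDerivative

theorem hug_ode_tangential_velocity_derivative_general
    (m n : ℕ)
    (f : Evec n → Evec m) (hf : ContDiff ℝ (⊤ : ℕ∞) f)
    (J : Evec n → Matrix (Fin m) (Fin n) ℝ)
    (hJ : ∀ x, HasFDerivAt f
      (LinearMap.toContinuousLinearMap (Matrix.toEuclideanLin (J x))) x)
    (hrank : ∀ x, (J x).rank = m)
    (Hm : Evec n → Evec n → Matrix (Fin m) (Fin n) ℝ)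
    (hHm : ∀ (x w z : Evec n), mvE (Hm x w) z = iteratedFDeriv ℝ 2 f x ![w, z])
    (I : Set ℝ) (x v : ℝ → Evec n)
    (hx : ∀ t ∈ I, HasDerivAt x (mvE (Tproj (J (x t))) (v t)) t)
    (hv : ∀ t ∈ I, HasDerivAt v (hugVField J Hm (x t) (v t)) t)
    :
    ∀ t ∈ I,
      HasDerivAt (fun s : ℝ => mvE (Tproj (J (x s))) (v s))
        (-(mvE (Npar' (J (x t)) (Hm (x t) (mvE (Nproj (J (x t))) (v t))))
            (mvE (Nproj (J (x t))) (v t)))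
          - mvE (Nperp' (J (x t)) (Hm (x t) (mvE (Tproj (J (x t))) (v t))))
            (mvE (Tproj (J (x t))) (v t))) t := by
  intro t ht
  have hA : IsUnit (J (x t) * (J (x t))ᵀ) :=
    isUnit_mul_transpose_of_rank_eq_card (by rw [hrank, Fintype.card_fin])
  have hJx : HasDerivAt (fun s => J (x s)) (Hm (x t) (mvE (Tproj (J (x t))) (v t))) t :=
    hasDerivAt_jacobian_comp (hx t ht) (hf.of_le (WithTop.coe_le_coe.mpr le_top)).contDiffAt hJ
      (hHm (x t))
  have hTv := ((hJx.nproj hA).const_sub 1).mvE (hv t ht)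
  have hHu : Hm (x t) (mvE (Tproj (J (x t)) - Nproj (J (x t))) (v t))
      = Hm (x t) (mvE (Tproj (J (x t))) (v t)) - Hm (x t) (mvE (Nproj (J (x t))) (v t)) := by
    rw [mvE_sub, hessian_sub (hHm (x t))]
  refine hTv.congr_deriv ?_
  rw [hugVField, hHu, ← tangential_hug_identity hA]
  rfl

theorem hug_ode_tangential_velocity_derivative
    (m n : ℕ) (hm : 0 < m) (hmn : m < n)
    (f : Evec n → Evec m) (hf : ContDiff ℝ (⊤ : ℕ∞) f)
    (J : Evec n → Matrix (Fin m) (Fin n) ℝ)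
    (hJ : ∀ x, HasFDerivAt f
      (LinearMap.toContinuousLinearMap (Matrix.toEuclideanLin (J x))) x)
    (hrank : ∀ x, (J x).rank = m)
    (Hm : Evec n → Evec n → Matrix (Fin m) (Fin n) ℝ)
    (hHm : ∀ (x w z : Evec n), mvE (Hm x w) z = iteratedFDeriv ℝ 2 f x ![w, z])
    (I : Set ℝ) (x v : ℝ → Evec n)
    (hx : ∀ t ∈ I, HasDerivAt x (mvE (Tproj (J (x t))) (v t)) t)
    (hv : ∀ t ∈ I, HasDerivAt v (hugVField J Hm (x t) (v t)) t)
    :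
    ∀ t ∈ I,
      HasDerivAt (fun s : ℝ => mvE (Tproj (J (x s))) (v s))
        (-(mvE (Npar' (J (x t)) (Hm (x t) (mvE (Nproj (J (x t))) (v t))))
            (mvE (Nproj (J (x t))) (v t)))
          - mvE (Nperp' (J (x t)) (Hm (x t) (mvE (Tproj (J (x t))) (v t))))
            (mvE (Tproj (J (x t))) (v t))) t :=
  hug_ode_tangential_velocity_derivative_general m n f hf J hJ hrank Hm hHm I x v hx hv
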